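/- Let N₄ act faithfully by orientation-preserving homeomorphisms of [0,1], and let x₀ ∈ (0,1) be any point not fixed by c. Then N₄ acts faithfully on the orbit of x₀: the only element of N₄ fixing every point of the orbit of x₀ is the identity. -/

import Mathlib

/-- A 4×4 integer matrix is lower unitriangular if it has `1`s on the diagonal
and `0`s above the diagonal. -/
def IsUnitriLower (M : Matrix (Fin 4) (Fin 4) ℤ) : Prop :=
  (∀ i, M i i = 1) ∧ ∀ i j : Fin 4, i < j → M i j = 0

/-- `N₄`: the group of 4×4 lower triangular integer matrices with `1`s on the diagonal,
realized as a subgroup of the units of the matrix ring. -/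
def N4 : Subgroup (Matrix (Fin 4) (Fin 4) ℤ)ˣ where
  carrier := {u | IsUnitriLower u.val}
  one_mem' := by
    refine ⟨fun i => ?_, fun i j hij => ?_⟩
    · simp [Matrix.one_apply_eq]
    · simp [Units.val_one, Matrix.one_apply_ne (ne_of_lt hij)]
  mul_mem' := by
    rintro a b ⟨ha1, ha2⟩ ⟨hb1, hb2⟩
    refine ⟨fun i => ?_, fun i j hij => ?_⟩
    · have key : ∀ k : Fin 4, a.val i k * b.val k i = if k = i then 1 else 0 := by
        intro k
        rcases lt_trichotomy k i with h | h | h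
        · rw [hb2 k i h, mul_zero, if_neg h.ne]
        · subst h
          rw [ha1, hb1, one_mul, if_pos rfl]
        · rw [ha2 i k h, zero_mul, if_neg h.ne']
      show (a.val * b.val) i i = 1
      rw [Matrix.mul_apply]
      simp [key]
    · show (a.val * b.val) i j = 0
      rw [Matrix.mul_apply]
      refine Finset.sum_eq_zero fun k _ => ?_
      rcases lt_or_ge i k with h | h
      · rw [ha2 i k h, zero_mul]
      · rw [hb2 k j (lt_of_le_of_lt h hij), mul_zero]
  inv_mem' := by
    rintro x ⟨ha1, ha2⟩
    set A := x.val with hA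
    set B := (x⁻¹).val with hB
    have hBA : B * A = 1 := by
      rw [hB, hA, ← Units.val_mul]
      simp
    have key : ∀ i j : Fin 4,
        B i 0 * A 0 j + B i 1 * A 1 j + B i 2 * A 2 j + B i 3 * A 3 j
          = if i = j then 1 else 0 := by
      intro i j
      have h : (B * A) i j = (1 : Matrix (Fin 4) (Fin 4) ℤ) i j := by rw [hBA]
      rw [Matrix.mul_apply, Fin.sum_univ_four] at h
      rw [h, Matrix.one_apply]
    have b03 : B 0 3 = 0 := by
      have h := key 0 3
      rw [ha2 0 3 (by decide), ha2 1 3 (by decide), ha2 2 3 (by decide), ha1 3,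
        if_neg (by decide)] at h
      simpa using h
    have b13 : B 1 3 = 0 := by
      have h := key 1 3
      rw [ha2 0 3 (by decide), ha2 1 3 (by decide), ha2 2 3 (by decide), ha1 3,
        if_neg (by decide)] at h
      simpa using h
    have b23 : B 2 3 = 0 := by
      have h := key 2 3
      rw [ha2 0 3 (by decide), ha2 1 3 (by decide), ha2 2 3 (by decide), ha1 3,
        if_neg (by decide)] at h
      simpa using h
    have b33 : B 3 3 = 1 := by
      have h := key 3 3
      rw [ha2 0 3 (by decide), ha2 1 3 (by decide), ha2 2 3 (by decide), ha1 3,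
        if_pos rfl] at h
      simpa using h
    have b02 : B 0 2 = 0 := by
      have h := key 0 2
      rw [ha2 0 2 (by decide), ha2 1 2 (by decide), ha1 2, b03, if_neg (by decide)] at h
      simpa using h
    have b12 : B 1 2 = 0 := by
      have h := key 1 2
      rw [ha2 0 2 (by decide), ha2 1 2 (by decide), ha1 2, b13, if_neg (by decide)] at h
      simpa using h
    have b22 : B 2 2 = 1 := by
      have h := key 2 2
      rw [ha2 0 2 (by decide), ha2 1 2 (by decide), ha1 2, b23, if_pos rfl] at h
      simpa using h
    have b01 : B 0 1 = 0 := by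
      have h := key 0 1
      rw [ha2 0 1 (by decide), ha1 1, b02, b03, if_neg (by decide)] at h
      simpa using h
    have b11 : B 1 1 = 1 := by
      have h := key 1 1
      rw [ha2 0 1 (by decide), ha1 1, b12, b13, if_pos rfl] at h
      simpa using h
    have b00 : B 0 0 = 1 := by
      have h := key 0 0
      rw [ha1 0, b01, b02, b03, if_pos rfl] at h
      simpa using h
    refine ⟨fun i => ?_, fun i j hij => ?_⟩
    · fin_cases i
      · exact b00
      · exact b11
      · exact b22
      · exact b33
    · fin_cases i <;> fin_cases j <;>
        first
          | exact absurd hij (by decide)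
          | exact b01
          | exact b02
          | exact b03
          | exact b12
          | exact b13
          | exact b23

/-- Helper to build elements of `N4` from a matrix, an explicit inverse, and proofs. -/
def mkN4 (M N : Matrix (Fin 4) (Fin 4) ℤ) (h1 : M * N = 1) (h2 : N * M = 1)
    (h : IsUnitriLower M) : N4 :=
  ⟨⟨M, N, h1, h2⟩, h⟩

/-- The generator `e` of `N₄`: entry `1` in position (2,1). -/
def e4 : N4 :=
  mkN4 !![1,0,0,0; 1,1,0,0; 0,0,1,0; 0,0,0,1] !![1,0,0,0; -1,1,0,0; 0,0,1,0; 0,0,0,1]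
    (by decide) (by decide) (by
      refine ⟨fun i => ?_, fun i j hij => ?_⟩
      · fin_cases i <;> rfl
      · fin_cases i <;> fin_cases j <;> first | rfl | exact absurd hij (by decide))

/-- The generator `f` of `N₄`: entry `1` in position (3,2). -/
def f4 : N4 :=
  mkN4 !![1,0,0,0; 0,1,0,0; 0,1,1,0; 0,0,0,1] !![1,0,0,0; 0,1,0,0; 0,-1,1,0; 0,0,0,1]
    (by decide) (by decide) (by
      refine ⟨fun i => ?_, fun i j hij => ?_⟩
      · fin_cases i <;> rfl
      · fin_cases i <;> fin_cases j <;> first | rfl | exact absurd hij (by decide))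

/-- The generator `d` of `N₄`: entry `1` in position (4,3). -/
def d4 : N4 :=
  mkN4 !![1,0,0,0; 0,1,0,0; 0,0,1,0; 0,0,1,1] !![1,0,0,0; 0,1,0,0; 0,0,1,0; 0,0,-1,1]
    (by decide) (by decide) (by
      refine ⟨fun i => ?_, fun i j hij => ?_⟩
      · fin_cases i <;> rfl
      · fin_cases i <;> fin_cases j <;> first | rfl | exact absurd hij (by decide))

/-- The generator `a` of `N₄`: entry `1` in position (3,1). -/
def a4 : N4 :=
  mkN4 !![1,0,0,0; 0,1,0,0; 1,0,1,0; 0,0,0,1] !![1,0,0,0; 0,1,0,0; -1,0,1,0; 0,0,0,1]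
    (by decide) (by decide) (by
      refine ⟨fun i => ?_, fun i j hij => ?_⟩
      · fin_cases i <;> rfl
      · fin_cases i <;> fin_cases j <;> first | rfl | exact absurd hij (by decide))

/-- The generator `b` of `N₄`: entry `1` in position (4,2). -/
def b4 : N4 :=
  mkN4 !![1,0,0,0; 0,1,0,0; 0,0,1,0; 0,1,0,1] !![1,0,0,0; 0,1,0,0; 0,0,1,0; 0,-1,0,1]
    (by decide) (by decide) (by
      refine ⟨fun i => ?_, fun i j hij => ?_⟩
      · fin_cases i <;> rfl
      · fin_cases i <;> fin_cases j <;> first | rfl | exact absurd hij (by decide))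

/-- The generator `c` of `N₄`: entry `1` in position (4,1). -/
def c4 : N4 :=
  mkN4 !![1,0,0,0; 0,1,0,0; 0,0,1,0; 1,0,0,1] !![1,0,0,0; 0,1,0,0; 0,0,1,0; -1,0,0,1]
    (by decide) (by decide) (by
      refine ⟨fun i => ?_, fun i j hij => ?_⟩
      · fin_cases i <;> rfl
      · fin_cases i <;> fin_cases j <;> first | rfl | exact absurd hij (by decide))

/-- The unit interval `[0,1]` as a subset of `ℝ`. -/
noncomputable def II : Set ℝ := Set.Icc 0 1

/-- `f : ℝ → ℝ` restricts to an orientation-preserving homeomorphism of `[0,1]`. -/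
def IsOPHomeoI (f : ℝ → ℝ) : Prop :=
  Set.BijOn f II II ∧ StrictMonoOn f II ∧ ContinuousOn f II

/-- `g` is `β`-Hölder continuous on `[0,1]` with constant `C`. -/
def HolderOnI (β C : ℝ) (g : ℝ → ℝ) : Prop :=
  ∀ x ∈ II, ∀ y ∈ II, |g x - g y| ≤ C * |x - y| ^ β

/-- `f : ℝ → ℝ` restricts to an orientation-preserving `C¹` diffeomorphism of `[0,1]`:
a strictly increasing bijection of `[0,1]`, continuously differentiable on `[0,1]`
with everywhere positive derivative. -/
def IsC1DiffeoI (f : ℝ → ℝ) : Prop :=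
  Set.BijOn f II II ∧ StrictMonoOn f II ∧
    (∀ x ∈ II, HasDerivWithinAt f (derivWithin f II x) II x) ∧
    ContinuousOn (derivWithin f II) II ∧
    ∀ x ∈ II, 0 < derivWithin f II x

/-- `f : ℝ → ℝ` restricts to an orientation-preserving `C^{1+α}` diffeomorphism of `[0,1]`:
a `C¹` diffeomorphism whose derivative is `α`-Hölder continuous. -/
def IsC1aDiffeoI (α : ℝ) (f : ℝ → ℝ) : Prop :=
  IsC1DiffeoI f ∧ ∃ C > 0, HolderOnI α C (derivWithin f II)

/-- `φ` is an action of `G` on `[0,1]`: `φ 1` is the identity on `[0,1]` and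
`φ (g * h)` is the composition `φ g ∘ φ h` on `[0,1]`. -/
def IsActionOnI {G : Type*} [Group G] (φ : G → ℝ → ℝ) : Prop :=
  Set.EqOn (φ 1) id II ∧ ∀ g h : G, Set.EqOn (φ (g * h)) (φ g ∘ φ h) II

/-- The action `φ` of `G` on `[0,1]` is faithful: elements acting identically
on `[0,1]` coincide. -/
def FaithfulOnI {G : Type*} [Group G] (φ : G → ℝ → ℝ) : Prop :=
  ∀ g h : G, Set.EqOn (φ g) (φ h) II → g = h

/-- `J_g(x) = [inf_{n ∈ ℤ} gⁿ(x), sup_{n ∈ ℤ} gⁿ(x)]` for the action `φ`. -/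
noncomputable def Jseg {G : Type*} [Group G] (φ : G → ℝ → ℝ) (g : G) (x : ℝ) : Set ℝ :=
  Set.Icc (⨅ n : ℤ, φ (g ^ n) x) (⨆ n : ℤ, φ (g ^ n) x)

/-- The map `f` moves the set `s`: `f(s)` and `s` are distinct and have
disjoint interiors. -/
def MovesSet (f : ℝ → ℝ) (s : Set ℝ) : Prop :=
  f '' s ≠ s ∧ Disjoint (interior (f '' s)) (interior s)

/-! The pointwise stabilizer `K` of the orbit of `x₀` is a normal subgroup of `N₄`. It meets the
centre `⟨c⟩` trivially: an increasing homeomorphism moving `x₀` moves it monotonically along its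
orbit, so no nonzero power of `c` fixes `x₀`. But every nontrivial normal subgroup of `N₄` meets
`⟨c⟩`: taking commutators of an element of `K` with `b`, `a`, `d` and `e` kills its entries below
the diagonal one by one, each commutator being a power of `c` (or, for `d`, lying in `⟨b, c⟩`). -/

open scoped commutatorElement

theorem commutatorElement_eq_of_mul_eq {G : Type*} [Group G] {g x z : G}
    (h : g * x = z * (x * g)) : ⁅g, x⁆ = z := by
  rw [commutatorElement_def, h]
  group

namespace N4

theorem ext_val {g h : N4} (hgh : g.val.val = h.val.val) : g = h :=
  Subtype.ext (Units.ext hgh)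

theorem val_mul (g h : N4) : (g * h).val.val = g.val.val * h.val.val := rfl

theorem exists_val_eq (g : N4) : ∃ p q r s t u : ℤ,
    g.val.val = !![1,0,0,0; p,1,0,0; q,r,1,0; s,t,u,1] := by
  obtain ⟨hdiag, hupper⟩ := g.2
  refine ⟨g.val.val 1 0, g.val.val 2 0, g.val.val 2 1, g.val.val 3 0, g.val.val 3 1,
    g.val.val 3 2, ?_⟩
  ext i j
  fin_cases i <;> fin_cases j <;> simp [hdiag, hupper]

-- `cb α β` is the element `c^α b^β`.
def cb (α β : ℤ) : N4 :=
  mkN4 !![1,0,0,0; 0,1,0,0; 0,0,1,0; α,β,0,1] !![1,0,0,0; 0,1,0,0; 0,0,1,0; -α,-β,0,1]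
    (by ext i j; fin_cases i <;> fin_cases j <;> simp [Matrix.mul_apply, Fin.sum_univ_four])
    (by ext i j; fin_cases i <;> fin_cases j <;> simp [Matrix.mul_apply, Fin.sum_univ_four])
    ⟨fun i => by fin_cases i <;> rfl, fun i j hij => by
      fin_cases i <;> fin_cases j <;> first | rfl | exact absurd hij (by decide)⟩

theorem val_cb (α β : ℤ) : (cb α β).val.val = !![1,0,0,0; 0,1,0,0; 0,0,1,0; α,β,0,1] := rfl

theorem cb_mul_cb (α β α' β' : ℤ) : cb α β * cb α' β' = cb (α + α') (β + β') := by
  apply ext_val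
  rw [val_mul, val_cb, val_cb, val_cb]
  ext i j
  fin_cases i <;> fin_cases j <;> simp [Matrix.mul_apply, Fin.sum_univ_four, add_comm]

theorem cb_zero : cb 0 0 = 1 := ext_val (by decide)

theorem c4_zpow (m : ℤ) : c4 ^ m = cb m 0 := by
  have hc : c4 = cb 1 0 := rfl
  induction m using Int.induction_on with
  | zero => rw [zpow_zero, cb_zero]
  | succ n ih => rw [zpow_add_one, ih, hc, cb_mul_cb, add_zero]
  | pred n ih =>
    have hinv : c4⁻¹ = cb (-1) 0 :=
      inv_eq_of_mul_eq_one_right (by rw [hc, cb_mul_cb]; exact cb_zero)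
    rw [zpow_sub_one, ih, hinv, cb_mul_cb, add_zero, sub_eq_add_neg]

section Commutators

variable {g : N4}

theorem commutatorElement_b4 {p q r s t u : ℤ}
    (hg : g.val.val = !![1,0,0,0; p,1,0,0; q,r,1,0; s,t,u,1]) : ⁅g, b4⁆ = c4 ^ (-p) := by
  refine commutatorElement_eq_of_mul_eq (ext_val ?_)
  rw [c4_zpow, val_mul, val_mul, val_mul, hg, val_cb]
  ext i j
  fin_cases i <;> fin_cases j <;> simp [b4, mkN4, Matrix.mul_apply, Fin.sum_univ_four, add_comm]

theorem commutatorElement_a4 {p q r s t u : ℤ}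
    (hg : g.val.val = !![1,0,0,0; p,1,0,0; q,r,1,0; s,t,u,1]) : ⁅g, a4⁆ = c4 ^ u := by
  refine commutatorElement_eq_of_mul_eq (ext_val ?_)
  rw [c4_zpow, val_mul, val_mul, val_mul, hg, val_cb]
  ext i j
  fin_cases i <;> fin_cases j <;> simp [a4, mkN4, Matrix.mul_apply, Fin.sum_univ_four] <;> ring

theorem commutatorElement_d4 {q r s t : ℤ}
    (hg : g.val.val = !![1,0,0,0; 0,1,0,0; q,r,1,0; s,t,0,1]) : ⁅g, d4⁆ = cb (-q) (-r) := by
  refine commutatorElement_eq_of_mul_eq (ext_val ?_)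
  rw [val_mul, val_mul, val_mul, hg, val_cb]
  ext i j
  fin_cases i <;> fin_cases j <;> simp [d4, mkN4, Matrix.mul_apply, Fin.sum_univ_four]

end Commutators

theorem commutatorElement_cb_e4 (α β : ℤ) : ⁅cb α β, e4⁆ = c4 ^ β := by
  refine commutatorElement_eq_of_mul_eq (ext_val ?_)
  rw [c4_zpow, val_mul, val_mul, val_mul, val_cb, val_cb]
  ext i j
  fin_cases i <;> fin_cases j <;> simp [e4, mkN4, Matrix.mul_apply, Fin.sum_univ_four, add_comm]

theorem eq_bot_of_normal_of_zpow_c4_mem (K : Subgroup N4) [K.Normal]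
    (hK : ∀ m : ℤ, c4 ^ m ∈ K → m = 0) : K = ⊥ := by
  have commutator_mem : ∀ {k : N4} (x : N4), k ∈ K → ⁅k, x⁆ ∈ K := fun x hk =>
    Subgroup.commutator_le_left K ⊤ (Subgroup.commutator_mem_commutator hk (Subgroup.mem_top x))
  refine (Subgroup.eq_bot_iff_forall K).2 fun g hg => ?_
  obtain ⟨p, q, r, s, t, u, hgval⟩ := exists_val_eq g
  obtain rfl : p = 0 :=
    neg_eq_zero.1 (hK _ (commutatorElement_b4 hgval ▸ commutator_mem b4 hg))
  obtain rfl : u = 0 := hK _ (commutatorElement_a4 hgval ▸ commutator_mem a4 hg)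
  have hcb : cb (-q) (-r) ∈ K := commutatorElement_d4 hgval ▸ commutator_mem d4 hg
  obtain rfl : r = 0 :=
    neg_eq_zero.1 (hK _ (commutatorElement_cb_e4 _ _ ▸ commutator_mem e4 hcb))
  obtain rfl : q = 0 := neg_eq_zero.1 (hK _ (by rwa [c4_zpow, ← neg_zero]))
  obtain rfl : g = cb s t := ext_val hgval
  obtain rfl : t = 0 := hK _ (commutatorElement_cb_e4 _ _ ▸ commutator_mem e4 hg)
  obtain rfl : s = 0 := hK _ (by rwa [c4_zpow])
  exact cb_zero

end N4

namespace IsActionOnI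

variable {G : Type*} [Group G] {φ : G → ℝ → ℝ}

theorem apply_inv_eq_self (hact : IsActionOnI φ) {g : G} {x : ℝ} (hx : x ∈ II)
    (hgx : φ g x = x) : φ g⁻¹ x = x := by
  calc φ g⁻¹ x = φ g⁻¹ (φ g x) := by rw [hgx]
    _ = φ (g⁻¹ * g) x := (hact.2 _ _ hx).symm
    _ = x := by rw [inv_mul_cancel]; exact hact.1 hx

def orbitKernel (hact : IsActionOnI φ) (hmaps : ∀ g, Set.MapsTo (φ g) II II) {x : ℝ}
    (hx : x ∈ II) : Subgroup G where
  carrier := {g | ∀ h, φ g (φ h x) = φ h x}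
  one_mem' h := hact.1 (hmaps h hx)
  mul_mem' {a b} ha hb h := by
    rw [hact.2 a b (hmaps h hx), Function.comp_apply, hb h, ha h]
  inv_mem' {a} ha h := hact.apply_inv_eq_self (hmaps h hx) (ha h)

instance (hact : IsActionOnI φ) (hmaps : ∀ g, Set.MapsTo (φ g) II II) {x : ℝ}
    (hx : x ∈ II) : (orbitKernel hact hmaps hx).Normal where
  conj_mem n hn w h := by
    have hw : φ w⁻¹ (φ h x) = φ (w⁻¹ * h) x := (hact.2 _ _ hx).symm
    have hwn : φ (w * n) (φ (w⁻¹ * h) x) = φ h x := by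
      rw [hact.2 w n (hmaps _ hx), Function.comp_apply, hn, ← Function.comp_apply (f := φ w),
        ← hact.2 w _ hx, mul_inv_cancel_left]
    rw [hact.2 _ _ (hmaps h hx), Function.comp_apply, hw, hwn]

theorem eq_zero_of_zpow_apply_eq_self (hact : IsActionOnI φ)
    (hmaps : ∀ g, Set.MapsTo (φ g) II II) (hmono : ∀ g, StrictMonoOn (φ g) II)
    {g : G} {x : ℝ} (hx : x ∈ II) (hgx : φ g x ≠ x) {n : ℤ} (hn : φ (g ^ n) x = x) :
    n = 0 := by
  have hsucc : ∀ k : ℕ, φ (g ^ (k + 1)) x = φ (g ^ k) (φ g x) := fun k => by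
    rw [pow_succ]; exact hact.2 _ _ hx
  have hinj : Function.Injective fun k : ℕ => φ (g ^ k) x := by
    rcases hgx.lt_or_gt with hlt | hlt
    · refine (strictAnti_nat_of_succ_lt fun k => ?_).injective
      rw [hsucc]; exact hmono _ (hmaps g hx) hx hlt
    · refine (strictMono_nat_of_lt_succ fun k => ?_).injective
      rw [hsucc]; exact hmono _ hx (hmaps g hx) hlt
  have hnatAbs : φ (g ^ n.natAbs) x = φ (g ^ 0) x := by
    rw [pow_zero, hact.1 hx]
    rcases Int.natAbs_eq n with hn' | hn'
    · rwa [hn', zpow_natCast] at hn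
    · rw [hn', zpow_neg, zpow_natCast] at hn
      simpa using hact.apply_inv_eq_self hx hn
  exact Int.natAbs_eq_zero.1 (hinj hnatAbs)

end IsActionOnI

theorem N4_faithful_on_orbit_general (φ : N4 → ℝ → ℝ)
    (hact : IsActionOnI φ) (hhomeo : ∀ g : N4, IsOPHomeoI (φ g))
    (x₀ : ℝ) (hx₀ : x₀ ∈ Set.Ioo (0 : ℝ) 1) (hc : φ c4 x₀ ≠ x₀) :
    ∀ g : N4, (∀ h : N4, φ g (φ h x₀) = φ h x₀) → g = 1 := by
  have hx : x₀ ∈ II := Set.Ioo_subset_Icc_self hx₀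
  have hmaps : ∀ g, Set.MapsTo (φ g) II II := fun g => (hhomeo g).1.mapsTo
  have hker : hact.orbitKernel hmaps hx = ⊥ := by
    refine N4.eq_bot_of_normal_of_zpow_c4_mem _ fun m hm => ?_
    have hfix : φ (c4 ^ m) x₀ = x₀ := by simpa [hact.1 hx] using hm 1
    exact hact.eq_zero_of_zpow_apply_eq_self hmaps (fun g => (hhomeo g).2.1) hx hc hfix
  exact (Subgroup.eq_bot_iff_forall _).1 hker

/-- **Remark 1.2.** If `N₄` acts faithfully by orientation-preserving homeomorphisms of
`[0,1]` and `x₀ ∈ (0,1)` is not fixed by the generator `c`, then `N₄` acts faithfully on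
the orbit of `x₀`: the only element fixing every point of the orbit is the identity. -/
theorem N4_faithful_on_orbit (φ : N4 → ℝ → ℝ)
    (hact : IsActionOnI φ) (hhomeo : ∀ g : N4, IsOPHomeoI (φ g))
    (hfaith : FaithfulOnI φ)
    (x₀ : ℝ) (hx₀ : x₀ ∈ Set.Ioo (0 : ℝ) 1) (hc : φ c4 x₀ ≠ x₀) :
    ∀ g : N4, (∀ h : N4, φ g (φ h x₀) = φ h x₀) → g = 1 :=
  N4_faithful_on_orbit_general φ hact hhomeo x₀ hx₀ hc
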